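/- Let V be an m-dimensional linear subspace of ℝⁿ, let α ∈ (0,∞), let X = X(V,α), and let Γ = Graph(f) for a Lipschitz function f : V → V⊥ with Lipschitz constant at most α/2. For every dyadic cube Q with Γ ∩ Q ≠ ∅, the non-tangential region T_{Q,X} = ⋃Δ*_{Q,X} (the union of the cubes in Δ*_{Q,X}) satisfies gap(T_{Q,X}, Γ) ≥ diam Q and excess(T_{Q,X}, Γ) ≤ 83·max(α,1/α)·diam Q. -/

import Mathlib

open MeasureTheory Metric Set
open scoped ENNReal NNReal

noncomputable section

abbrev E (n : ℕ) := EuclideanSpace ℝ (Fin n)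

/-- The bad cone `X(V,α) = {x : dist(x,V) > α · dist(x,V^⊥)}`. -/
def badCone {n : ℕ} (V : Submodule ℝ (E n)) (α : ℝ) : Set (E n) :=
  {x | α * Metric.infDist x (Vᗮ : Set (E n)) < Metric.infDist x (V : Set (E n))}

/-- The translated bad cone `X_x = x + X(V,α)`. -/
def badConeAt {n : ℕ} (V : Submodule ℝ (E n)) (α : ℝ) (x : E n) : Set (E n) :=
  {y | y - x ∈ badCone V α}

/-- `f` has Lipschitz constant at most `α`. -/
def LipBound {n : ℕ} (V : Submodule ℝ (E n)) (α : ℝ) (f : V → Vᗮ) : Prop :=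
  ∀ v w : V, dist (f v) (f w) ≤ α * dist v w

/-- The graph of `f : V → V^⊥`, as a subset of `ℝⁿ`. -/
def graphOf {n : ℕ} (V : Submodule ℝ (E n)) (f : V → Vᗮ) : Set (E n) :=
  {x | ∃ v : V, x = (v : E n) + (f v : E n)}

/-- A half-open dyadic cube, described by generation `k` and corner coordinates `j`. -/
structure DyadicCube (n : ℕ) where
  k : ℤ
  j : Fin n → ℤ

namespace DyadicCube

/-- Side length `2^{-k}`. -/
def side {n : ℕ} (Q : DyadicCube n) : ℝ := 2 ^ (-Q.k)

/-- The cube as a subset of `ℝⁿ`. -/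
def toSet {n : ℕ} (Q : DyadicCube n) : Set (E n) :=
  {x | ∀ i, (Q.j i : ℝ) * Q.side ≤ x i ∧ x i < ((Q.j i : ℝ) + 1) * Q.side}

/-- The geometric center of the cube. -/
def center {n : ℕ} (Q : DyadicCube n) : E n :=
  (EuclideanSpace.equiv (Fin n) ℝ).symm fun i => ((Q.j i : ℝ) + 1 / 2) * Q.side

/-- The diameter `√n · side Q`. -/
def diam {n : ℕ} (Q : DyadicCube n) : ℝ := Real.sqrt n * Q.side

end DyadicCube

/-- The radius `r_{Q,X} = 81 √n max(α,1/α) side Q`. -/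
def coneRadius {n : ℕ} (α : ℝ) (Q : DyadicCube n) : ℝ :=
  81 * Real.sqrt n * max α α⁻¹ * Q.side

/-- The conical annulus `A_{Q,X} = X_Q ∩ B̄(x_Q,r_{Q,X}) \ U(x_Q,r_{Q,X}/3)`. -/
def conAnnulus {n : ℕ} (V : Submodule ℝ (E n)) (α : ℝ) (Q : DyadicCube n) : Set (E n) :=
  ((⋃ x ∈ Q.toSet, badConeAt V α x) ∩ closedBall Q.center (coneRadius α Q)) \
    ball Q.center (coneRadius α Q / 3)

/-- The discretized conical annulus `Δ*_{Q,X}`. -/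
def discAnnulus {n : ℕ} (V : Submodule ℝ (E n)) (α : ℝ) (Q : DyadicCube n) :
    Set (DyadicCube n) :=
  {R | R.side = Q.side ∧ (R.toSet ∩ conAnnulus V α Q).Nonempty}

/-- The conical defect `Defect(μ,Q,X)`. -/
def defect {n : ℕ} (μ : Measure (E n)) (V : Submodule ℝ (E n)) (α : ℝ)
    (Q : DyadicCube n) : ℝ≥0∞ :=
  if μ Q.toSet = 0 then 0
  else ∑' R : discAnnulus V α Q, μ (R : DyadicCube n).toSet / μ Q.toSet

/-- The conical Dini function `G_{μ,X}(x)`. -/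
def dini {n : ℕ} (μ : Measure (E n)) (V : Submodule ℝ (E n)) (α : ℝ) (x : E n) : ℝ≥0∞ :=
  ∑' Q : {Q : DyadicCube n // Q.side ≤ 1 ∧ x ∈ Q.toSet}, defect μ V α Q.1

/-- `gap(S,T) = inf {|s-t| : s ∈ S, t ∈ T}` (with value `∞` if either set is empty). -/
def gap {n : ℕ} (S T : Set (E n)) : ℝ≥0∞ :=
  ⨅ (s : S) (t : T), edist (s : E n) (t : E n)

/-- `excess(S,T) = sup_{s∈S} inf_{t∈T} |s-t|` (with `excess(∅,T) = 0`). -/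
def excess {n : ℕ} (S T : Set (E n)) : ℝ≥0∞ :=
  ⨆ s : S, ⨅ t : T, edist (s : E n) (t : E n)

/-- `S` is a tree of dyadic cubes with top cube `top`. -/
def IsDyadicTree {n : ℕ} (S : Set (DyadicCube n)) (top : DyadicCube n) : Prop :=
  top ∈ S ∧ (∀ Q ∈ S, Q.toSet ⊆ top.toSet) ∧
    ∀ Q ∈ S, ∀ P : DyadicCube n, Q.toSet ⊆ P.toSet → P.toSet ⊆ top.toSet → P ∈ S

/-- The set of leaves of a family `S` of dyadic cubes with top cube `top`:
the union over infinite branches of the intersections along the branch. -/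
def leavesOf {n : ℕ} (top : DyadicCube n) (S : Set (DyadicCube n)) : Set (E n) :=
  {x | ∃ β : ℕ → DyadicCube n, (∀ i, β i ∈ S) ∧ (∀ i, (β i).k = top.k + i) ∧
    (∀ i, (β (i + 1)).toSet ⊆ (β i).toSet) ∧ ∀ i, x ∈ (β i).toSet}

/-- `Γ` is an `m`-dimensional Lipschitz graph in `ℝⁿ`. -/
def IsLipGraph (n m : ℕ) (Γ : Set (E n)) : Prop :=
  ∃ (V : Submodule ℝ (E n)) (f : V → Vᗮ) (L : ℝ),
    Module.finrank ℝ V = m ∧ 0 ≤ L ∧ LipBound V L f ∧ Γ = graphOf V f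

/-- `μ` is carried by `m`-dimensional Lipschitz graphs. -/
def CarriedByGraphs (n m : ℕ) (μ : Measure (E n)) : Prop :=
  ∃ Γ : ℕ → Set (E n), (∀ i, IsLipGraph n m (Γ i)) ∧ μ (univ \ ⋃ i, Γ i) = 0

/-- `μ` is singular to `m`-dimensional Lipschitz graphs. -/
def SingularToGraphs (n m : ℕ) (μ : Measure (E n)) : Prop :=
  ∀ Γ : Set (E n), IsLipGraph n m Γ → μ Γ = 0


/-
A vector `z` in the bad cone is steep (`α‖P z‖ < ‖z - P z‖`, with `P` the projection onto `V`),
while differences of points of the graph are flat (`‖s - P s‖ ≤ (α/2)‖P s‖`); comparing the `V`-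
and `V^⊥`-components gives `α‖z‖ ≤ (1+α)(α+2)‖z - s‖`. A point `a` of the conical annulus is
`a = x + z` with `x ∈ Q` and `‖z‖ ≳ 27 max(α,1/α) diam Q`, and `Q` contains a point `γ₀` of the
graph, so `a` stays at distance `2 diam Q` from every `γ = γ₀ + s` on the graph. The cubes of
`Δ*_{Q,X}` have diameter `diam Q` and meet the annulus, which gives the gap; the excess is
bounded by the distance to `γ₀` through the center of `Q`.
-/

section Cones

variable {F : Type*} [NormedAddCommGroup F] [InnerProductSpace ℝ F]
  (K : Submodule ℝ F) [K.HasOrthogonalProjection]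

theorem Submodule.infDist_eq_norm_sub_starProjection (x : F) :
    infDist x K = ‖x - K.starProjection x‖ := by
  rw [infDist_eq_iInf, starProjection_minimal]
  simp only [dist_eq_norm]
  rfl

theorem Submodule.infDist_orthogonal_eq_norm_starProjection (x : F) :
    infDist x Kᗮ = ‖K.starProjection x‖ := by
  rw [Kᗮ.infDist_eq_norm_sub_starProjection, starProjection_orthogonal_val, sub_sub_cancel]

theorem Submodule.norm_sub_starProjection_le (x : F) : ‖x - K.starProjection x‖ ≤ ‖x‖ := by
  simpa using Kᗮ.norm_starProjection_apply_le x

theorem mul_norm_le_of_steep {α : ℝ} (hα : 0 < α) {z : F}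
    (hz : α * ‖K.starProjection z‖ ≤ ‖z - K.starProjection z‖) :
    α * ‖z‖ ≤ (1 + α) * ‖z - K.starProjection z‖ := by
  have : ‖z‖ ≤ ‖K.starProjection z‖ + ‖z - K.starProjection z‖ := by
    simpa using norm_add_le (K.starProjection z) (z - K.starProjection z)
  nlinarith

theorem norm_sub_starProjection_le_of_steep_of_flat {α : ℝ} (hα : 0 ≤ α) {z s₁ s₂ : F}
    (hz : α * ‖K.starProjection z‖ ≤ ‖z - K.starProjection z‖)
    (hs₁ : s₁ ∈ K) (hs₂ : s₂ ∈ Kᗮ) (hs : ‖s₂‖ ≤ α / 2 * ‖s₁‖) :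
    ‖z - K.starProjection z‖ ≤ (α + 2) * ‖z - (s₁ + s₂)‖ := by
  have hP : K.starProjection (z - (s₁ + s₂)) = K.starProjection z - s₁ := by
    rw [map_sub, K.eq_starProjection_of_mem_orthogonal' hs₁ hs₂ rfl]
  have h₁ : ‖s₁‖ - ‖K.starProjection z‖ ≤ ‖z - (s₁ + s₂)‖ :=
    calc ‖s₁‖ - ‖K.starProjection z‖ ≤ ‖K.starProjection z - s₁‖ := by
          rw [norm_sub_rev]; exact norm_sub_norm_le _ _
      _ ≤ ‖z - (s₁ + s₂)‖ := hP ▸ K.norm_starProjection_apply_le _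
  have h₂ : ‖z - K.starProjection z‖ - ‖s₂‖ ≤ ‖z - (s₁ + s₂)‖ :=
    calc ‖z - K.starProjection z‖ - ‖s₂‖ ≤ ‖z - K.starProjection z - s₂‖ := norm_sub_norm_le _ _
      _ = ‖z - (s₁ + s₂) - K.starProjection (z - (s₁ + s₂))‖ := by rw [hP]; congr 1; abel
      _ ≤ ‖z - (s₁ + s₂)‖ := K.norm_sub_starProjection_le _
  nlinarith [mul_le_mul_of_nonneg_left h₁ hα]

theorem mul_norm_le_mul_norm_sub_of_steep_of_flat {α : ℝ} (hα : 0 < α) {z s₁ s₂ : F}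
    (hz : α * ‖K.starProjection z‖ ≤ ‖z - K.starProjection z‖)
    (hs₁ : s₁ ∈ K) (hs₂ : s₂ ∈ Kᗮ) (hs : ‖s₂‖ ≤ α / 2 * ‖s₁‖) :
    α * ‖z‖ ≤ (1 + α) * (α + 2) * ‖z - (s₁ + s₂)‖ :=
  calc α * ‖z‖ ≤ (1 + α) * ‖z - K.starProjection z‖ := mul_norm_le_of_steep K hα hz
    _ ≤ (1 + α) * (α + 2) * ‖z - (s₁ + s₂)‖ := by
      rw [mul_assoc]
      gcongr
      exact norm_sub_starProjection_le_of_steep_of_flat K hα.le hz hs₁ hs₂ hs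

end Cones

theorem mem_badCone_iff {n : ℕ} {V : Submodule ℝ (E n)} {α : ℝ} {z : E n} :
    z ∈ badCone V α ↔ α * ‖V.starProjection z‖ < ‖z - V.starProjection z‖ := by
  rw [badCone, mem_ofPred_eq, V.infDist_eq_norm_sub_starProjection,
    V.infDist_orthogonal_eq_norm_starProjection]

theorem dist_le_sqrt_mul_of_abs_sub_le {n : ℕ} {x y : E n} {c : ℝ} (hc : 0 ≤ c)
    (h : ∀ i, |x i - y i| ≤ c) : dist x y ≤ √n * c := by
  rw [EuclideanSpace.dist_eq, ← Real.sqrt_sq hc, ← Real.sqrt_mul (Nat.cast_nonneg n)]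
  refine Real.sqrt_le_sqrt ?_
  calc ∑ i, dist (x i) (y i) ^ 2 ≤ ∑ _i : Fin n, c ^ 2 := Finset.sum_le_sum fun i _ => by
        rw [Real.dist_eq]; exact pow_le_pow_left₀ (abs_nonneg _) (h i) 2
    _ = n * c ^ 2 := by simp

namespace DyadicCube

variable {n : ℕ} (Q : DyadicCube n)

theorem side_pos : 0 < Q.side := zpow_pos two_pos _

theorem diam_nonneg : 0 ≤ Q.diam := mul_nonneg (Real.sqrt_nonneg _) Q.side_pos.le

theorem dist_le_diam {x y : E n} (hx : x ∈ Q.toSet) (hy : y ∈ Q.toSet) : dist x y ≤ Q.diam :=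
  dist_le_sqrt_mul_of_abs_sub_le Q.side_pos.le fun i => by
    obtain ⟨hx₁, hx₂⟩ := hx i
    obtain ⟨hy₁, hy₂⟩ := hy i
    rw [add_mul, one_mul] at hx₂ hy₂
    rw [abs_le]
    constructor <;> linarith

theorem dist_center_le {x : E n} (hx : x ∈ Q.toSet) : dist x Q.center ≤ Q.diam / 2 := by
  rw [diam, mul_div_assoc]
  refine dist_le_sqrt_mul_of_abs_sub_le (half_pos Q.side_pos).le fun i => ?_
  obtain ⟨hx₁, hx₂⟩ := hx i
  have hc : Q.center i = (Q.j i + 1 / 2) * Q.side := rfl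
  rw [add_mul, one_mul] at hx₂
  rw [hc, add_mul, abs_le]
  constructor <;> linarith

end DyadicCube

theorem one_le_max_inv {α : ℝ} (hα : 0 < α) : 1 ≤ max α α⁻¹ := by
  rcases le_total 1 α with h | h
  · exact h.trans (le_max_left _ _)
  · exact (one_le_inv₀ hα |>.mpr h).trans (le_max_right _ _)

theorem three_mul_one_add_mul_add_two_le {α : ℝ} (hα : 0 < α) :
    3 * ((1 + α) * (α + 2)) ≤ α * (27 * max α α⁻¹ - 1 / 2) := by
  have h₁ : α * α ≤ α * max α α⁻¹ := mul_le_mul_of_nonneg_left (le_max_left _ _) hα.le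
  have h₂ : 1 ≤ α * max α α⁻¹ := by
    calc (1 : ℝ) = α * α⁻¹ := (mul_inv_cancel₀ hα.ne').symm
      _ ≤ α * max α α⁻¹ := mul_le_mul_of_nonneg_left (le_max_right _ _) hα.le
  have h₃ : α ≤ α * max α α⁻¹ := le_mul_of_one_le_right hα.le (one_le_max_inv hα)
  nlinarith

theorem coneRadius_eq {n : ℕ} (α : ℝ) (Q : DyadicCube n) :
    coneRadius α Q = 81 * max α α⁻¹ * Q.diam := by
  rw [coneRadius, DyadicCube.diam]
  ring

theorem two_mul_diam_le_dist_of_mem_conAnnulus {n : ℕ} {V : Submodule ℝ (E n)} {α : ℝ}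
    (hα : 0 < α) {f : V → Vᗮ} (hf : LipBound V (α / 2) f) {Q : DyadicCube n} {γ₀ : E n}
    (hγ₀ : γ₀ ∈ graphOf V f ∩ Q.toSet) {a γ : E n} (ha : a ∈ conAnnulus V α Q)
    (hγ : γ ∈ graphOf V f) : 2 * Q.diam ≤ dist a γ := by
  obtain ⟨⟨v₀, rfl⟩, hγ₀Q⟩ := hγ₀
  obtain ⟨v, rfl⟩ := hγ
  obtain ⟨⟨hcone, -⟩, hfar⟩ := ha
  obtain ⟨x, hxQ, hax : a - x ∈ badCone V α⟩ := mem_iUnion₂.mp hcone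
  set z := a - x
  set s₁ : E n := (v : E n) - v₀
  set s₂ : E n := (f v : E n) - f v₀
  have hflat : ‖s₂‖ ≤ α / 2 * ‖s₁‖ := by
    have := hf v v₀
    rwa [Subtype.dist_eq, Subtype.dist_eq, dist_eq_norm, dist_eq_norm] at this
  have hsep : α * ‖z‖ ≤ (1 + α) * (α + 2) * ‖z - (s₁ + s₂)‖ :=
    mul_norm_le_mul_norm_sub_of_steep_of_flat V hα (mem_badCone_iff.mp hax).le
      (V.sub_mem v.2 v₀.2) (Vᗮ.sub_mem (f v).2 (f v₀).2) hflat
  have hz_lower : 27 * max α α⁻¹ * Q.diam - Q.diam / 2 ≤ ‖z‖ := by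
    have h₁ : coneRadius α Q / 3 ≤ dist a Q.center := by simpa using hfar
    rw [coneRadius_eq] at h₁
    linarith [dist_triangle a x Q.center, Q.dist_center_le hxQ, dist_eq_norm a x]
  have hz_upper : ‖z - (s₁ + s₂)‖ ≤ dist a (v + f v) + Q.diam := by
    have hsplit : z - (s₁ + s₂) = (a - (v + f v)) - (x - (v₀ + f v₀)) := by
      simp only [z, s₁, s₂]; abel
    rw [hsplit, dist_eq_norm]
    refine (norm_sub_le _ _).trans ?_
    gcongr
    exact (dist_eq_norm x _).symm.le.trans (Q.dist_le_diam hxQ hγ₀Q)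
  have key : (1 + α) * (α + 2) * (3 * Q.diam) ≤ (1 + α) * (α + 2) * (dist a (v + f v) + Q.diam) :=
    calc (1 + α) * (α + 2) * (3 * Q.diam)
        ≤ α * (27 * max α α⁻¹ - 1 / 2) * Q.diam := by
          rw [← mul_assoc, mul_comm _ (3 : ℝ)]
          exact mul_le_mul_of_nonneg_right (three_mul_one_add_mul_add_two_le hα) Q.diam_nonneg
      _ ≤ α * ‖z‖ := by
          rw [mul_assoc]
          exact mul_le_mul_of_nonneg_left (by linarith) hα.le
      _ ≤ (1 + α) * (α + 2) * (dist a (v + f v) + Q.diam) := hsep.trans (by gcongr)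
  linarith [le_of_mul_le_mul_left key (by positivity)]

theorem exists_mem_conAnnulus_dist_le {n : ℕ} {V : Submodule ℝ (E n)} {α : ℝ}
    {Q : DyadicCube n} {y : E n} (hy : y ∈ ⋃ R ∈ discAnnulus V α Q, R.toSet) :
    ∃ a ∈ conAnnulus V α Q, dist y a ≤ Q.diam := by
  obtain ⟨R, ⟨hside, a, haR, ha⟩, hyR⟩ := mem_iUnion₂.mp hy
  have hdiam : R.diam = Q.diam := by rw [DyadicCube.diam, DyadicCube.diam, hside]
  exact ⟨a, ha, hdiam ▸ R.dist_le_diam hyR haR⟩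

theorem ofReal_le_gap {n : ℕ} {S T : Set (E n)} {c : ℝ}
    (h : ∀ s ∈ S, ∀ t ∈ T, c ≤ dist s t) : ENNReal.ofReal c ≤ gap S T :=
  le_iInf₂ fun s t => by
    rw [edist_dist]
    exact ENNReal.ofReal_le_ofReal (h s s.2 t t.2)

theorem excess_le_ofReal {n : ℕ} {S T : Set (E n)} {t₀ : E n} (ht₀ : t₀ ∈ T) {c : ℝ}
    (h : ∀ s ∈ S, dist s t₀ ≤ c) : excess S T ≤ ENNReal.ofReal c :=
  iSup_le fun s => (iInf_le _ ⟨t₀, ht₀⟩).trans <| by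
    rw [edist_dist]
    exact ENNReal.ofReal_le_ofReal (h s s.2)

theorem statement9_general {n : ℕ}
    (V : Submodule ℝ (E n)) (α : ℝ) (hα : 0 < α)
    (f : V → Vᗮ) (hf : LipBound V (α / 2) f)
    (Q : DyadicCube n) (hQ : (graphOf V f ∩ Q.toSet).Nonempty) :
    ENNReal.ofReal Q.diam ≤ gap (⋃ R ∈ discAnnulus V α Q, R.toSet) (graphOf V f) ∧
      excess (⋃ R ∈ discAnnulus V α Q, R.toSet) (graphOf V f)
        ≤ ENNReal.ofReal (83 * max α α⁻¹ * Q.diam) := by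
  obtain ⟨γ₀, hγ₀⟩ := hQ
  constructor
  · refine ofReal_le_gap fun y hy γ hγ => ?_
    obtain ⟨a, ha, hya⟩ := exists_mem_conAnnulus_dist_le hy
    have := two_mul_diam_le_dist_of_mem_conAnnulus hα hf hγ₀ ha hγ
    linarith [dist_triangle a y γ, dist_comm a y]
  · refine excess_le_ofReal hγ₀.1 fun y hy => ?_
    obtain ⟨a, ha, hya⟩ := exists_mem_conAnnulus_dist_le hy
    have hac : dist a Q.center ≤ 81 * max α α⁻¹ * Q.diam :=
      coneRadius_eq α Q ▸ mem_closedBall.mp ha.1.2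
    have hγ₀c : dist γ₀ Q.center ≤ Q.diam / 2 := Q.dist_center_le hγ₀.2
    have hM : Q.diam ≤ max α α⁻¹ * Q.diam :=
      le_mul_of_one_le_left Q.diam_nonneg (one_le_max_inv hα)
    linarith [dist_triangle4 y a Q.center γ₀, dist_comm γ₀ Q.center, Q.diam_nonneg]

theorem statement9 {n m : ℕ} (hm : 1 ≤ m) (hmn : m ≤ n - 1)
    (V : Submodule ℝ (E n)) (hV : Module.finrank ℝ V = m) (α : ℝ) (hα : 0 < α)
    (f : V → Vᗮ) (hf : LipBound V (α / 2) f)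
    (Q : DyadicCube n) (hQ : (graphOf V f ∩ Q.toSet).Nonempty) :
    ENNReal.ofReal Q.diam ≤ gap (⋃ R ∈ discAnnulus V α Q, R.toSet) (graphOf V f) ∧
      excess (⋃ R ∈ discAnnulus V α Q, R.toSet) (graphOf V f)
        ≤ ENNReal.ofReal (83 * max α α⁻¹ * Q.diam) :=
  statement9_general V α hα f hf Q hQ

end
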